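/- arXiv:0809.2963 — 5 statements merged into one kernel-verified Lean document; each statement's English description precedes it below -/
import Mathlib

section
/- (Liouville Principle, ℓ² version.) If ψ ∈ ℓ²(ℤ²) satisfies Q^b ψ = 0, where Q^b = 1 + t₁ + t₂ on the triangular lattice, then ψ = 0. -/
def Qb (ψ : ℤ × ℤ → ℝ) : ℤ × ℤ → ℝ :=
  fun p => ψ p + ψ (p.1 + 1, p.2) + ψ (p.1, p.2 + 1)

/-!
Let `a m = ∑ₙ ψ(m,n)²` be the squared norm of the `m`-th column of `ψ`. The relation `Q^b ψ = 0`
says that column `m + 1` is `T` applied to column `m`, where `T f = -(f + f(· + 1))` is a normal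
operator on `ℓ²(ℤ)`; hence `‖T f‖² ≤ ‖f‖ ‖T² f‖`, i.e. `m ↦ a m` is log-convex. A nonnegative
log-convex sequence tending to `0` at both ends vanishes: at a maximum `a M > 0`, log-convexity
gives `a (M + 1) ≥ a M`, so the maximum is attained at `M, M + 1, M + 2, …`.
-/

open Filter Topology

theorem Memℓp.summable_sq {ι : Type*} {f : ι → ℝ} (hf : Memℓp f 2) :
    Summable fun i => f i ^ 2 := by
  simpa using (memℓp_gen_iff (by norm_num : 0 < (2 : ENNReal).toReal)).mp hf

section SquareSummable

variable {ι : Type*} {f g : ι → ℝ}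

theorem Summable.mul_of_sq (hf : Summable fun i => f i ^ 2) (hg : Summable fun i => g i ^ 2) :
    Summable fun i => f i * g i :=
  .of_norm_bounded ((hf.add hg).div_const 2) fun i => by
    rw [Real.norm_eq_abs, abs_mul]
    nlinarith [sq_nonneg (|f i| - |g i|), sq_abs (f i), sq_abs (g i)]

theorem Summable.sq_add (hf : Summable fun i => f i ^ 2) (hg : Summable fun i => g i ^ 2) :
    Summable fun i => (f i + g i) ^ 2 :=
  .of_nonneg_of_le (fun _ => sq_nonneg _) (fun i => by nlinarith [sq_nonneg (f i - g i)])
    ((hf.add hg).mul_left 2)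

theorem tsum_mul_sq_le_sq_mul_sq (hf : Summable fun i => f i ^ 2)
    (hg : Summable fun i => g i ^ 2) :
    (∑' i, f i * g i) ^ 2 ≤ (∑' i, f i ^ 2) * ∑' i, g i ^ 2 := by
  refine le_of_tendsto ((hf.mul_of_sq hg).hasSum.pow 2) (Eventually.of_forall fun s => ?_)
  calc (∑ i ∈ s, f i * g i) ^ 2
      ≤ (∑ i ∈ s, f i ^ 2) * ∑ i ∈ s, g i ^ 2 := Finset.sum_mul_sq_le_sq_mul_sq s f g
    _ ≤ (∑' i, f i ^ 2) * ∑' i, g i ^ 2 :=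
      mul_le_mul (hf.sum_le_tsum s fun _ _ => sq_nonneg _) (hg.sum_le_tsum s fun _ _ => sq_nonneg _)
        (Finset.sum_nonneg fun _ _ => sq_nonneg _) (tsum_nonneg fun _ => sq_nonneg _)

end SquareSummable

section Shift

variable {G : Type*} [AddGroup G] (s : G) {f g h : G → ℝ}

theorem Summable.comp_add_right {u : G → ℝ} (hu : Summable u) : Summable fun x => u (x + s) :=
  (Equiv.addRight s).summable_iff.mpr hu

theorem Summable.sq_of_add_add_eq_zero (hf : Summable fun x => f x ^ 2)
    (hfg : ∀ x, f x + g x + f (x + s) = 0) : Summable fun x => g x ^ 2 :=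
  (hf.sq_add (hf.comp_add_right s (u := fun x => f x ^ 2))).congr fun x => by
    rw [show g x = -(f x + f (x + s)) by linarith [hfg x], neg_sq]

theorem sq_tsum_sq_le_of_add_add_eq_zero (hf : Summable fun x => f x ^ 2)
    (hfg : ∀ x, f x + g x + f (x + s) = 0) (hgh : ∀ x, g x + h x + g (x + s) = 0) :
    (∑' x, g x ^ 2) ^ 2 ≤ (∑' x, f x ^ 2) * ∑' x, h x ^ 2 := by
  have hg := hf.sq_of_add_add_eq_zero s hfg
  have hh := hg.sq_of_add_add_eq_zero s hgh
  have hf' := hf.comp_add_right s (u := fun x => f x ^ 2)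
  have hg' := hg.comp_add_right s (u := fun x => g x ^ 2)
  have hshift : ∑' x, f x * g x = ∑' x, f (x + s) * g (x + s) :=
    ((Equiv.addRight s).tsum_eq fun x => f x * g x).symm
  have hnorm : ∑' x, g x ^ 2 = ∑' x, f (x + s) * h x := by
    calc ∑' x, g x ^ 2 = -(∑' x, f x * g x) - ∑' x, f (x + s) * g x := by
          rw [← tsum_neg, ← (hf.mul_of_sq hg).neg.tsum_sub (hf'.mul_of_sq hg)]
          exact tsum_congr fun x => by linear_combination g x * hfg x
      _ = ∑' x, f (x + s) * h x := by
          rw [hshift, ← tsum_neg, ← (hf'.mul_of_sq hg').neg.tsum_sub (hf'.mul_of_sq hg)]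
          exact tsum_congr fun x => by linear_combination -f (x + s) * hgh x
  calc (∑' x, g x ^ 2) ^ 2 = (∑' x, f (x + s) * h x) ^ 2 := by rw [hnorm]
    _ ≤ (∑' x, f (x + s) ^ 2) * ∑' x, h x ^ 2 := tsum_mul_sq_le_sq_mul_sq hf' hh
    _ = (∑' x, f x ^ 2) * ∑' x, h x ^ 2 := by
      congr 1; exact (Equiv.addRight s).tsum_eq fun x => f x ^ 2

end Shift

theorem eq_zero_of_sq_le_mul_of_tendsto_cofinite {a : ℤ → ℝ} (ha : 0 ≤ a)
    (hconv : ∀ n, a (n + 1) ^ 2 ≤ a n * a (n + 2)) (hlim : Tendsto a cofinite (𝓝 0)) :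
    a = 0 := by
  by_contra hne
  obtain ⟨k, hk⟩ : ∃ k, 0 < a k := by
    by_contra! h
    exact hne (funext fun n => le_antisymm (h n) (ha n))
  obtain ⟨M, hM⟩ : ∃ M, ∀ n, a n ≤ a M := by
    refine continuous_of_discreteTopology.exists_forall_ge' k ?_
    rw [cocompact_eq_cofinite]
    exact hlim.eventually (eventually_le_nhds hk)
  have hpos : 0 < a M := hk.trans_le (hM k)
  have hstep : ∀ n, a n = a M → a (n + 1) = a M := by
    intro n hn
    have h := hconv (n - 1)
    rw [sub_add_cancel, show n - 1 + 2 = n + 1 by ring, hn, sq] at h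
    refine le_antisymm (hM _) (le_of_mul_le_mul_left ?_ hpos)
    exact h.trans (mul_le_mul_of_nonneg_right (hM _) (ha _))
  have hconst : ∀ j : ℕ, a (M + j) = a M := by
    intro j
    induction j with
    | zero => simp
    | succ j ih => rw [Nat.cast_succ, ← add_assoc]; exact hstep _ ih
  have hlim' : Tendsto (fun j : ℕ => a (M + j)) atTop (𝓝 0) := by
    rw [← Nat.cofinite_eq_atTop]
    exact hlim.comp (add_right_injective M |>.comp Nat.cast_injective).tendsto_cofinite
  simp only [hconst] at hlim'
  exact hpos.ne' (tendsto_nhds_unique tendsto_const_nhds hlim')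

/-- Liouville principle: an ℓ² d-holomorphic function on the triangular lattice vanishes. -/
theorem liouville_l2 (ψ : ℤ × ℤ → ℝ) (hψ : Memℓp ψ 2)
    (hol : ∀ p : ℤ × ℤ, Qb ψ p = 0) : ψ = 0 := by
  have hsum := hψ.summable_sq
  have hcol : ∀ m, Summable fun n => ψ (m, n) ^ 2 := hsum.prod_factor
  have hQ : ∀ m n, ψ (m, n) + ψ (m + 1, n) + ψ (m, n + 1) = 0 := fun m n => hol (m, n)
  have hnorm : (fun m => ∑' n, ψ (m, n) ^ 2) = 0 := by
    refine eq_zero_of_sq_le_mul_of_tendsto_cofinite (fun m => tsum_nonneg fun _ => sq_nonneg _)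
      (fun m => ?_) hsum.prod.tendsto_cofinite_zero
    refine sq_tsum_sq_le_of_add_add_eq_zero 1 (hcol m) (hQ m) ?_
    simpa only [add_assoc, one_add_one_eq_two] using hQ (m + 1)
  funext p
  have hcol0 := (hasSum_zero_iff_of_nonneg fun _ => sq_nonneg _).mp
    (congrFun hnorm p.1 ▸ (hcol p.1).hasSum)
  simpa using congrFun hcol0 p.2
end

section
/- For constants a, b, c, d ∈ ℝ with b, c, d > 0, there exist constants u, v, w, W ∈ ℝ with uv = b, uw = c, vw = d such that L = Q*Q + W where L = a + b t₁ + c t₂ + d t₁t₂⁻¹ + (adjoint terms) and Q = u + v t₁ + w t₂, i.e., the symbol identity a + b e^{ik₁} + c e^{ik₂} + d e^{i(k₁−k₂)} + b e^{−ik₁} + c e^{−ik₂} + d e^{−i(k₁−k₂)} = |u + v e^{ik₁} + w e^{ik₂}|² + W holds for all k₁, k₂. -/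
open Complex

/-- Laplace-type factorization of a constant-coefficient second order self-adjoint
difference operator on the triangular lattice, at the level of symbols. -/
theorem laplace_factorization (a b c d : ℝ) (hb : 0 < b) (hc : 0 < c) (hd : 0 < d) :
    ∃ u v w W : ℝ, u * v = b ∧ u * w = c ∧ v * w = d ∧
      ∀ k₁ k₂ : ℝ,
        (a : ℂ) + b * exp (I * k₁) + c * exp (I * k₂) + d * exp (I * (k₁ - k₂)) +
          b * exp (-I * k₁) + c * exp (-I * k₂) + d * exp (-I * (k₁ - k₂)) =
        (‖(u : ℂ) + v * exp (I * k₁) + w * exp (I * k₂)‖^2 + W : ℝ) := by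
  set u := Real.sqrt (b * c / d) with hu
  set v := Real.sqrt (b * d / c) with hv
  set w := Real.sqrt (c * d / b) with hw
  have huv : u * v = b := by
    rw [hu, hv, ← Real.sqrt_mul (by positivity)]
    rw [show b * c / d * (b * d / c) = b ^ 2 by field_simp]
    exact Real.sqrt_sq hb.le
  have huw : u * w = c := by
    rw [hu, hw, ← Real.sqrt_mul (by positivity)]
    rw [show b * c / d * (c * d / b) = c ^ 2 by field_simp]
    exact Real.sqrt_sq hc.le
  have hvw : v * w = d := by
    rw [hv, hw, ← Real.sqrt_mul (by positivity)]
    rw [show b * d / c * (c * d / b) = d ^ 2 by field_simp]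
    exact Real.sqrt_sq hd.le
  refine ⟨u, v, w, a - u ^ 2 - v ^ 2 - w ^ 2, huv, huw, hvw, fun k₁ k₂ => ?_⟩
  have key : ((‖(u : ℂ) + v * exp (I * k₁) + w * exp (I * k₂)‖ : ℝ)^2 : ℂ)
      = ((u : ℂ) + v * exp (I * k₁) + w * exp (I * k₂)) *
        ((u : ℂ) + v * exp (-I * k₁) + w * exp (-I * k₂)) := by
    rw [← Complex.ofReal_pow, ← Complex.normSq_eq_norm_sq, ← Complex.mul_conj]
    congr 1
    simp only [map_add, map_mul, Complex.conj_ofReal, ← Complex.exp_conj, map_neg,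
      Complex.conj_I, neg_mul]
  have h1 : exp (I * k₁) * exp (-I * k₁) = 1 := by
    rw [← Complex.exp_add]; ring_nf; exact Complex.exp_zero
  have h2 : exp (I * k₂) * exp (-I * k₂) = 1 := by
    rw [← Complex.exp_add]; ring_nf; exact Complex.exp_zero
  have h3 : exp (I * ((k₁ : ℂ) - k₂)) = exp (I * k₁) * exp (-I * k₂) := by
    rw [← Complex.exp_add]; ring_nf
  have h4 : exp (-I * ((k₁ : ℂ) - k₂)) = exp (-I * k₁) * exp (I * k₂) := by
    rw [← Complex.exp_add]; ring_nf
  have hn1 : exp (-I * (k₁:ℂ)) = (exp (I * k₁))⁻¹ := by rw [← Complex.exp_neg]; ring_nf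
  have hn2 : exp (-I * (k₂:ℂ)) = (exp (I * k₂))⁻¹ := by rw [← Complex.exp_neg]; ring_nf
  push_cast
  rw [key, h3, h4, ← huv, ← huw, ← hvw, hn1, hn2]
  push_cast
  field_simp
  ring
end

section
/- The double integral G(m,n) = (const) ∫₀^{2π}∫₀^{2π} e^{imk₁} e^{ink₂} (1 + e^{ik₁} + e^{ik₂})^{−1} dk₁ dk₂ converges (the integrand's singularity along the curve 1 + e^{ik₁} + e^{ik₂} = 0 is integrable), and G satisfies Q^b G = δ₀ in the sense that G(m,n) + G(m+1,n) + G(m,n+1) = [(m,n) = (0,0)] (up to the normalizing constant (2π)^{−2}). -/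
open MeasureTheory Complex Real

noncomputable def G (m n : ℤ) : ℂ :=
  (1 / (2 * π)^2) *
    ∫ k in Set.Icc (0 : ℝ) (2 * π) ×ˢ Set.Icc (0 : ℝ) (2 * π),
      exp (I * (m * k.1 + n * k.2)) * (1 + exp (I * k.1) + exp (I * k.2))⁻¹

/-!
Since `‖e^{ib}‖ = 1` and `‖1 + e^{ia}‖² = 2 + 2 cos a`, the reverse triangle inequality gives
`|1 + 2 cos a| ≤ 3 ‖1 + e^{ia} + e^{ib}‖`, and likewise with `b`; hence
`‖(1 + e^{ia} + e^{ib})⁻¹‖ ≤ 3 |1 + 2 cos a|^{-1/2} |1 + 2 cos b|^{-1/2}`. The zeros of `1 + 2 cos`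
are simple, so `|1 + 2 cos|^{-1/2}` is locally integrable and the product bound is integrable on
compact sets. Away from the null set where the symbol vanishes, the three integrands of `QᵇG` add
up to `e^{imk₁} e^{ink₂}`, whose integral over the square is `(2π)² δ_{m0} δ_{n0}`.
-/

open Filter Asymptotics

theorem abs_sq_norm_sub_sq_norm_le {E : Type*} [SeminormedAddCommGroup E] (x y : E) :
    |‖x‖ ^ 2 - ‖y‖ ^ 2| ≤ ‖x + y‖ * (‖x‖ + ‖y‖) := by
  rw [sq_sub_sq, abs_mul, abs_of_nonneg (by positivity : 0 ≤ ‖x‖ + ‖y‖), mul_comm]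
  gcongr
  simpa using abs_norm_sub_norm_le x (-y)

theorem locallyIntegrable_abs_sub_rpow {r : ℝ} (hr : -1 < r) (c : ℝ) :
    LocallyIntegrable (fun x : ℝ => |x - c| ^ r) := by
  have h₀ : LocallyIntegrable (fun x : ℝ => |x| ^ r) :=
    locallyIntegrable_of_norm_le_rpow (C := 1) (α := -r) (by simp)
      (by rw [Module.finrank_self]; push_cast; linarith)
      (ae_of_all _ fun x => by simp [abs_of_nonneg (rpow_nonneg (abs_nonneg x) r)])
      (measurable_id.abs.pow_const r).aestronglyMeasurable
  rw [← map_sub_right_eq_self volume c] at h₀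
  exact (locallyIntegrable_map_homeomorph (Homeomorph.subRight c)).1 h₀

theorem locallyIntegrable_abs_rpow_of_hasDerivAt {φ φ' : ℝ → ℝ}
    (hφ : ∀ x, HasDerivAt φ (φ' x) x) (hφ' : ∀ x, φ x = 0 → φ' x ≠ 0)
    {r : ℝ} (hr₁ : -1 < r) (hr₀ : r < 0) :
    LocallyIntegrable (fun x => |φ x| ^ r) := by
  have hcont : Continuous φ := continuous_iff_continuousAt.2 fun x => (hφ x).continuousAt
  have hmeas : StronglyMeasurable (fun x => |φ x| ^ r) :=
    (hcont.measurable.abs.pow_const r).stronglyMeasurable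
  intro x₀
  by_cases hx₀ : φ x₀ = 0
  · obtain ⟨C, hC, hlower⟩ :=
      (((hφ x₀).isTheta_sub (hφ' x₀ hx₀)).isBigO_symm.comp_tendsto
        (tendsto_id.prodMk tendsto_const_pure)).exists_pos
    refine IsBigO.integrableAtFilter (g := fun x => |x - x₀| ^ r) ?_
      hmeas.stronglyMeasurableAtFilter (locallyIntegrable_abs_sub_rpow hr₁ x₀ x₀)
    refine IsBigO.of_bound (C ^ (-r)) ?_
    filter_upwards [hlower.bound] with x hx
    simp only [Function.comp_apply, id, hx₀, sub_zero, Real.norm_eq_abs] at hx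
    rw [norm_of_nonneg (by positivity), norm_of_nonneg (by positivity)]
    rcases eq_or_ne x x₀ with rfl | hne
    · rw [hx₀, abs_zero, zero_rpow hr₀.ne]; positivity
    · have hpos : 0 < |x - x₀| := abs_pos.2 (sub_ne_zero.2 hne)
      have hpow := rpow_le_rpow_of_nonpos hpos hx hr₀.le
      rw [mul_rpow hC.le (abs_nonneg _)] at hpow
      calc |φ x| ^ r = C ^ (-r) * (C ^ r * |φ x| ^ r) := by
            rw [← mul_assoc, ← rpow_add hC, neg_add_cancel, rpow_zero, one_mul]
        _ ≤ C ^ (-r) * |x - x₀| ^ r := by gcongr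
  · refine IsBigO.integrableAtFilter (g := fun _ => (1 : ℝ)) ?_
      hmeas.stronglyMeasurableAtFilter (locallyIntegrable_const 1 x₀)
    exact (hcont.abs.continuousAt.rpow_const (Or.inl (abs_ne_zero.2 hx₀))).isBigO_one ℝ

theorem countable_setOf_cos_eq (y : ℝ) : {x : ℝ | Real.cos x = Real.cos y}.Countable := by
  refine ((Set.countable_range fun k : ℤ => y - 2 * k * π).union
    (Set.countable_range fun k : ℤ => 2 * k * π - y)).mono fun x hx => ?_
  obtain ⟨k, hk | hk⟩ := Real.cos_eq_cos_iff.1 hx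
  · exact Or.inl ⟨k, by linarith⟩
  · exact Or.inr ⟨k, by linarith⟩

theorem ae_cos_ne (c : ℝ) : ∀ᵐ x : ℝ, Real.cos x ≠ c := by
  by_cases hc : ∃ y, Real.cos y = c
  · obtain ⟨y, rfl⟩ := hc
    exact (countable_setOf_cos_eq y).ae_notMem volume
  · push Not at hc
    exact ae_of_all _ hc

theorem locallyIntegrable_abs_one_add_two_mul_cos_rpow {r : ℝ} (hr₁ : -1 < r) (hr₀ : r < 0) :
    LocallyIntegrable (fun x => |1 + 2 * Real.cos x| ^ r) := by
  refine locallyIntegrable_abs_rpow_of_hasDerivAt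
    (fun x => ((Real.hasDerivAt_cos x).const_mul 2).const_add 1) (fun x hx => ?_) hr₁ hr₀
  have : Real.sin x ≠ 0 := fun h => by nlinarith [Real.sin_sq_add_cos_sq x]
  simpa using this

theorem sq_norm_one_add_exp_I_mul (a : ℝ) :
    ‖1 + exp (I * a)‖ ^ 2 = 2 + 2 * Real.cos a := by
  rw [mul_comm, exp_mul_I, ← ofReal_cos, ← ofReal_sin, Complex.sq_norm,
    show (1 : ℂ) + (Real.cos a + Real.sin a * I) = ↑(1 + Real.cos a) + Real.sin a * I by
      push_cast; ring, normSq_add_mul_I]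
  nlinarith [Real.sin_sq_add_cos_sq a]

theorem abs_one_add_two_mul_cos_le (a b : ℝ) :
    |1 + 2 * Real.cos a| ≤ 3 * ‖1 + exp (I * a) + exp (I * b)‖ := by
  have hv : ‖exp (I * b)‖ = 1 := by rw [mul_comm]; exact norm_exp_ofReal_mul_I b
  have hu : ‖1 + exp (I * a)‖ ≤ 2 := by
    refine (norm_add_le _ _).trans ?_
    rw [norm_one, mul_comm, norm_exp_ofReal_mul_I]; norm_num
  calc |1 + 2 * Real.cos a| = |‖1 + exp (I * a)‖ ^ 2 - ‖exp (I * b)‖ ^ 2| := by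
        rw [sq_norm_one_add_exp_I_mul, hv]; ring_nf
    _ ≤ ‖1 + exp (I * a) + exp (I * b)‖ * (‖1 + exp (I * a)‖ + ‖exp (I * b)‖) :=
        abs_sq_norm_sub_sq_norm_le _ _
    _ ≤ 3 * ‖1 + exp (I * a) + exp (I * b)‖ := by
        rw [hv, mul_comm]; gcongr; linarith

theorem norm_inv_one_add_exp_add_exp_le {a b : ℝ} (ha : 1 + 2 * Real.cos a ≠ 0)
    (hb : 1 + 2 * Real.cos b ≠ 0) :
    ‖(1 + exp (I * a) + exp (I * b))⁻¹‖ ≤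
      3 * (|1 + 2 * Real.cos a| ^ (-(1 / 2) : ℝ) * |1 + 2 * Real.cos b| ^ (-(1 / 2) : ℝ)) := by
  have hpa := abs_one_add_two_mul_cos_le a b
  have hpb := abs_one_add_two_mul_cos_le b a
  rw [add_right_comm] at hpb
  set p := |1 + 2 * Real.cos a|
  set q := |1 + 2 * Real.cos b|
  set w := ‖1 + exp (I * a) + exp (I * b)‖
  have hp : 0 < p := abs_pos.2 ha
  have hq : 0 < q := abs_pos.2 hb
  have hw : 0 < w := by linarith
  have hpq : √(p * q) ≤ 3 * w :=
    Real.sqrt_le_iff.2 ⟨by positivity, by nlinarith⟩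
  rw [norm_inv, ← mul_rpow hp.le hq.le, rpow_neg (by positivity), ← sqrt_eq_rpow,
    ← div_eq_mul_inv, le_div_iff₀ (by positivity), inv_mul_eq_div, div_le_iff₀ hw]
  linarith

theorem ae_norm_inv_one_add_exp_add_exp_le : ∀ᵐ k : ℝ × ℝ,
    ‖(1 + exp (I * k.1) + exp (I * k.2))⁻¹‖ ≤
      3 * (|1 + 2 * Real.cos k.1| ^ (-(1 / 2) : ℝ) * |1 + 2 * Real.cos k.2| ^ (-(1 / 2) : ℝ)) := by
  filter_upwards [Measure.quasiMeasurePreserving_fst.ae (ae_cos_ne (-(1 / 2))),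
    Measure.quasiMeasurePreserving_snd.ae (ae_cos_ne (-(1 / 2)))] with k h₁ h₂
  exact norm_inv_one_add_exp_add_exp_le (fun h => h₁ (by linarith)) (fun h => h₂ (by linarith))

theorem ae_one_add_exp_add_exp_ne_zero :
    ∀ᵐ k : ℝ × ℝ, 1 + exp (I * k.1) + exp (I * k.2) ≠ 0 := by
  filter_upwards [Measure.quasiMeasurePreserving_fst.ae (ae_cos_ne (-(1 / 2)))] with k hk hz
  have := abs_one_add_two_mul_cos_le k.1 k.2
  rw [hz, norm_zero, mul_zero, abs_nonpos_iff] at this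
  exact hk (by linarith)

theorem locallyIntegrable_norm_inv_one_add_exp_add_exp :
    LocallyIntegrable (fun k : ℝ × ℝ => ‖(1 + exp (I * k.1) + exp (I * k.2))⁻¹‖) := by
  have hF := locallyIntegrable_abs_one_add_two_mul_cos_rpow (r := -(1 / 2))
    (by norm_num) (by norm_num)
  rw [locallyIntegrable_iff]
  intro K hK
  have hprod : IntegrableOn (fun k : ℝ × ℝ => |1 + 2 * Real.cos k.1| ^ (-(1 / 2) : ℝ) *
      |1 + 2 * Real.cos k.2| ^ (-(1 / 2) : ℝ)) ((Prod.fst '' K) ×ˢ (Prod.snd '' K)) := by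
    rw [IntegrableOn, Measure.volume_eq_prod, ← Measure.prod_restrict]
    exact (hF.integrableOn_isCompact (hK.image continuous_fst)).mul_prod
      (hF.integrableOn_isCompact (hK.image continuous_snd))
  refine ((hprod.mono_set Set.subset_prod).const_mul 3).mono' ?_
    (ae_restrict_of_ae (ae_norm_inv_one_add_exp_add_exp_le.mono fun k hk => by rwa [norm_norm]))
  exact (by fun_prop : Continuous fun k : ℝ × ℝ => 1 + exp (I * k.1) + exp (I * k.2))
    |>.measurable.inv.norm.aestronglyMeasurable

theorem setIntegral_Icc_exp_I_mul_int_mul (m : ℤ) :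
    ∫ x in Set.Icc (0 : ℝ) (2 * π), exp (I * (m * x)) = if m = 0 then 2 * π else 0 := by
  rw [integral_Icc_eq_integral_Ioc, ← intervalIntegral.integral_of_le (by positivity)]
  split_ifs with hm
  · simp [hm]
  · have hc : I * m ≠ 0 := mul_ne_zero I_ne_zero (Int.cast_ne_zero.2 hm)
    simp_rw [← mul_assoc]
    rw [integral_exp_mul_complex hc]
    have : I * m * (2 * π) = m * (2 * π * I) := by ring
    simp [this, exp_int_mul_two_pi_mul_I]

noncomputable def greenIntegrand (m n : ℤ) (k : ℝ × ℝ) : ℂ :=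
  exp (I * (m * k.1 + n * k.2)) * (1 + exp (I * k.1) + exp (I * k.2))⁻¹

theorem greenIntegrand_add {k : ℝ × ℝ} (hk : 1 + exp (I * k.1) + exp (I * k.2) ≠ 0) (m n : ℤ) :
    greenIntegrand m n k + greenIntegrand (m + 1) n k + greenIntegrand m (n + 1) k =
      exp (I * (m * k.1)) * exp (I * (n * k.2)) := by
  have hexp (a b : ℂ) : exp (I * (a + b)) = exp (I * a) * exp (I * b) := by
    rw [mul_add, Complex.exp_add]
  simp only [greenIntegrand, Int.cast_add, Int.cast_one, add_mul, one_mul, hexp]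
  field_simp

theorem integrableOn_greenIntegrand (m n : ℤ) {s : Set (ℝ × ℝ)} (hs : IsCompact s) :
    IntegrableOn (greenIntegrand m n) s := by
  have hmeas : Measurable (greenIntegrand m n) := by unfold greenIntegrand; fun_prop
  refine (locallyIntegrable_norm_inv_one_add_exp_add_exp.integrableOn_isCompact hs).mono'
    hmeas.aestronglyMeasurable (ae_of_all _ fun k => ?_)
  simp [greenIntegrand, Complex.norm_exp]

theorem setIntegral_greenIntegrand_add (m n : ℤ) {s : Set (ℝ × ℝ)} (hs : IsCompact s) :
    (∫ k in s, greenIntegrand m n k) + (∫ k in s, greenIntegrand (m + 1) n k) +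
        ∫ k in s, greenIntegrand m (n + 1) k =
      ∫ k in s, exp (I * (m * k.1)) * exp (I * (n * k.2)) := by
  have h₁ := integrableOn_greenIntegrand m n hs
  have h₂ := integrableOn_greenIntegrand (m + 1) n hs
  have h₃ := integrableOn_greenIntegrand m (n + 1) hs
  rw [← integral_add h₁ h₂, ← integral_add
    (f := fun k => greenIntegrand m n k + greenIntegrand (m + 1) n k) (h₁.add h₂) h₃]
  exact integral_congr_ae <| ae_restrict_of_ae <|
    ae_one_add_exp_add_exp_ne_zero.mono fun k hk => greenIntegrand_add hk m n

/-- The Fourier-integral Green function of the black triangle operator: the integrand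
is integrable and `QᵇG = δ₀`. -/
theorem green_function_fourier :
    IntegrableOn
      (fun k : ℝ × ℝ => ‖(1 + exp (I * k.1) + exp (I * k.2))⁻¹‖)
      (Set.Icc (0 : ℝ) (2 * π) ×ˢ Set.Icc (0 : ℝ) (2 * π)) volume ∧
    ∀ m n : ℤ, G m n + G (m + 1) n + G m (n + 1) =
      if m = 0 ∧ n = 0 then 1 else 0 := by
  have hsquare : IsCompact (Set.Icc (0 : ℝ) (2 * π) ×ˢ Set.Icc (0 : ℝ) (2 * π)) :=
    isCompact_Icc.prod isCompact_Icc
  refine ⟨locallyIntegrable_norm_inv_one_add_exp_add_exp.integrableOn_isCompact hsquare,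
    fun m n => ?_⟩
  calc G m n + G (m + 1) n + G m (n + 1)
      = 1 / (2 * π) ^ 2 * ((∫ x in Set.Icc (0 : ℝ) (2 * π), exp (I * (m * x))) *
          ∫ x in Set.Icc (0 : ℝ) (2 * π), exp (I * (n * x))) := by
        rw [← setIntegral_prod_mul, ← Measure.volume_eq_prod,
          ← setIntegral_greenIntegrand_add m n hsquare]
        simp only [G, greenIntegrand]
        ring
    _ = if m = 0 ∧ n = 0 then 1 else 0 := by
        rw [setIntegral_Icc_exp_I_mul_int_mul, setIntegral_Icc_exp_I_mul_int_mul]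
        by_cases hm : m = 0 <;> by_cases hn : n = 0 <;> simp [hm, hn]
        field_simp
end

section
/- The space of ψ : ℤ² → ℝ satisfying both ψ(m,n)+ψ(m+1,n)+ψ(m,n+1) = 0 and ψ(m,n)+ψ(m−1,n)+ψ(m,n−1) = 0 for all (m,n) is exactly 2-dimensional. -/
private def g1 : ZMod 3 → ℤ := fun k => if k = 0 then 1 else if k = 1 then -1 else 0
private def g2 : ZMod 3 → ℤ := fun k => if k = 0 then 0 else if k = 1 then 1 else -1

private def f1 : ZMod 3 → ℝ := fun k => (g1 k : ℝ)
private def f2 : ZMod 3 → ℝ := fun k => (g2 k : ℝ)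

private lemma f1_0 : f1 0 = 1 := by simp [f1, g1]
private lemma f1_1 : f1 1 = -1 := by
  have : g1 1 = -1 := by decide
  simp [f1, this]
private lemma f1_2 : f1 2 = 0 := by
  have : g1 2 = 0 := by decide
  simp [f1, this]
private lemma f2_0 : f2 0 = 0 := by simp [f2, g2]
private lemma f2_1 : f2 1 = 1 := by
  have : g2 1 = 1 := by decide
  simp [f2, this]
private lemma f2_2 : f2 2 = -1 := by
  have : g2 2 = -1 := by decide
  simp [f2, this]

private lemma f1_rec : ∀ j : ZMod 3, f1 j + f1 (j + 1) + f1 (j - 1) = 0 := by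
  intro j
  have h : g1 j + g1 (j + 1) + g1 (j - 1) = 0 := by revert j; decide
  simp only [f1]
  exact_mod_cast congrArg (fun z : ℤ => (z : ℝ)) h

private lemma f2_rec : ∀ j : ZMod 3, f2 j + f2 (j + 1) + f2 (j - 1) = 0 := by
  intro j
  have h : g2 j + g2 (j + 1) + g2 (j - 1) = 0 := by revert j; decide
  simp only [f2]
  exact_mod_cast congrArg (fun z : ℤ => (z : ℝ)) h

/-- The space of covariant constants on the triangular lattice (solutions of both
triangle equations) is exactly two-dimensional. -/
theorem covariant_constants_two_dimensional :
    ∃ ψ₁ ψ₂ : ℤ × ℤ → ℝ,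
      (∀ m n : ℤ, ψ₁ (m, n) + ψ₁ (m + 1, n) + ψ₁ (m, n + 1) = 0 ∧
        ψ₁ (m, n) + ψ₁ (m - 1, n) + ψ₁ (m, n - 1) = 0) ∧
      (∀ m n : ℤ, ψ₂ (m, n) + ψ₂ (m + 1, n) + ψ₂ (m, n + 1) = 0 ∧
        ψ₂ (m, n) + ψ₂ (m - 1, n) + ψ₂ (m, n - 1) = 0) ∧
      LinearIndependent ℝ ![ψ₁, ψ₂] ∧
      ∀ ψ : ℤ × ℤ → ℝ,
        (∀ m n : ℤ, ψ (m, n) + ψ (m + 1, n) + ψ (m, n + 1) = 0 ∧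
          ψ (m, n) + ψ (m - 1, n) + ψ (m, n - 1) = 0) →
        ∃ a b : ℝ, ψ = a • ψ₁ + b • ψ₂ := by
  refine ⟨fun p => f1 ((p.1 - p.2 : ℤ) : ZMod 3),
         fun p => f2 ((p.1 - p.2 : ℤ) : ZMod 3), ?_, ?_, ?_, ?_⟩
  · intro m n
    refine ⟨?_, ?_⟩ <;>
    · have key := f1_rec ((m - n : ℤ) : ZMod 3)
      simp only
      push_cast
      push_cast at key
      have e1 : ((m : ZMod 3) + 1 - n) = ((m : ZMod 3) - n) + 1 := by ring
      have e2 : ((m : ZMod 3) - (n + 1)) = ((m : ZMod 3) - n) - 1 := by ring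
      have e3 : ((m : ZMod 3) - 1 - n) = ((m : ZMod 3) - n) - 1 := by ring
      have e4 : ((m : ZMod 3) - (n - 1)) = ((m : ZMod 3) - n) + 1 := by ring
      first
      | (rw [e1, e2]; linarith)
      | (rw [e3, e4]; linarith)
  · intro m n
    refine ⟨?_, ?_⟩ <;>
    · have key := f2_rec ((m - n : ℤ) : ZMod 3)
      simp only
      push_cast
      push_cast at key
      have e1 : ((m : ZMod 3) + 1 - n) = ((m : ZMod 3) - n) + 1 := by ring
      have e2 : ((m : ZMod 3) - (n + 1)) = ((m : ZMod 3) - n) - 1 := by ring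
      have e3 : ((m : ZMod 3) - 1 - n) = ((m : ZMod 3) - n) - 1 := by ring
      have e4 : ((m : ZMod 3) - (n - 1)) = ((m : ZMod 3) - n) + 1 := by ring
      first
      | (rw [e1, e2]; linarith)
      | (rw [e3, e4]; linarith)
  · rw [LinearIndependent.pair_iff]
    intro s t hst
    have h0 := congrFun hst ((0 : ℤ), (0 : ℤ))
    have h1 := congrFun hst ((1 : ℤ), (0 : ℤ))
    simp only [Pi.add_apply, Pi.smul_apply, Pi.zero_apply, smul_eq_mul] at h0 h1
    have c0 : ((((0 : ℤ) , (0 : ℤ)).1 - ((0 : ℤ), (0 : ℤ)).2 : ℤ) : ZMod 3) = 0 := by decide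
    have c1 : ((((1 : ℤ) , (0 : ℤ)).1 - ((1 : ℤ), (0 : ℤ)).2 : ℤ) : ZMod 3) = 1 := by decide
    rw [c0, f1_0, f2_0] at h0
    rw [c1, f1_1, f2_1] at h1
    constructor <;> linarith
  · intro ψ h
    have hshift : ∀ m n : ℤ, ψ (m + 1, n + 1) = ψ (m, n) := by
      intro m n
      have h1 := (h m n).1
      have h2 := (h (m + 1) (n + 1)).2
      simp only [add_sub_cancel_right] at h2
      linarith
    have htr : ∀ t m n : ℤ, ψ (m + t, n + t) = ψ (m, n) := by
      intro t
      induction t using Int.induction_on with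
      | zero => simp
      | succ k ih =>
        intro m n
        have e1 : m + ((k : ℤ) + 1) = (m + k) + 1 := by ring
        have e2 : n + ((k : ℤ) + 1) = (n + k) + 1 := by ring
        rw [e1, e2, hshift, ih]
      | pred k ih =>
        intro m n
        have e1 : m + (-(k : ℤ) - 1) + 1 = m + (-(k : ℤ)) := by ring
        have e2 : n + (-(k : ℤ) - 1) + 1 = n + (-(k : ℤ)) := by ring
        have hs := hshift (m + (-(k : ℤ) - 1)) (n + (-(k : ℤ) - 1))
        rw [e1, e2] at hs
        rw [← hs]
        exact ih m n
    have hdiag : ∀ m n : ℤ, ψ (m, n) = ψ (m - n, 0) := by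
      intro m n
      have := htr n (m - n) 0
      simp only [sub_add_cancel, zero_add] at this
      exact this
    have grec : ∀ k : ℤ, ψ (k, 0) + ψ (k + 1, 0) + ψ (k - 1, 0) = 0 := by
      intro k
      have h1 := (h k 0).1
      have hd := hdiag k (0 + 1)
      rw [hd] at h1
      have e : k - (0 + 1) = k - 1 := by ring
      rw [e] at h1
      linarith
    set a : ℝ := ψ (0, 0) with ha
    set b : ℝ := -ψ (2, 0) with hb
    set A : ZMod 3 → ℝ := fun j => a * f1 j + b * f2 j with hA
    have Arec : ∀ j : ZMod 3, A j + A (j + 1) + A (j - 1) = 0 := by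
      intro j
      have hf1 := f1_rec j
      have hf2 := f2_rec j
      simp only [hA]
      linear_combination a * hf1 + b * hf2
    have hg1 : ψ (1, 0) = -a + b := by
      have hr := grec 1
      have e1 : (1 : ℤ) + 1 = 2 := by norm_num
      have e2 : (1 : ℤ) - 1 = 0 := by norm_num
      rw [e1, e2] at hr
      rw [ha, hb]
      linarith
    have key : ∀ k : ℤ, ψ (k, 0) = A (k : ZMod 3) ∧ ψ (k + 1, 0) = A ((k : ZMod 3) + 1) := by
      intro k
      induction k using Int.induction_on with
      | zero =>
        constructor
        · simp only [Int.cast_zero, hA, f1_0, f2_0]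
          rw [mul_one, mul_zero, add_zero]
        · have e : (0 : ℤ) + 1 = 1 := by norm_num
          rw [e]
          simp only [Int.cast_zero, zero_add, hA, f1_1, f2_1]
          rw [hg1]; ring
      | succ k ih =>
        obtain ⟨ih1, ih2⟩ := ih
        push_cast at ih1 ih2 ⊢
        have hr := grec ((k : ℤ) + 1)
        have e : (k : ℤ) + 1 - 1 = (k : ℤ) := by ring
        rw [e, ih1, ih2] at hr
        have hAr := Arec ((k : ZMod 3) + 1)
        have eA : (k : ZMod 3) + 1 - 1 = (k : ZMod 3) := by ring
        rw [eA] at hAr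
        exact ⟨ih2, by linarith⟩
      | pred k ih =>
        obtain ⟨ih1, ih2⟩ := ih
        push_cast at ih1 ih2
        have hr := grec (-(k : ℤ))
        rw [ih1, ih2] at hr
        have hAr := Arec (-(k : ZMod 3))
        constructor
        · push_cast
          linarith
        · have e : -(k : ℤ) - 1 + 1 = -(k : ℤ) := by ring
          rw [e, ih1]
          congr 1
          push_cast
          ring
    refine ⟨a, b, ?_⟩
    funext p
    obtain ⟨m, n⟩ := p
    have h1 := hdiag m n
    have h2 := (key (m - n)).1
    simp only [Pi.add_apply, Pi.smul_apply, smul_eq_mul]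
    rw [h1, h2]
end

section
/- (Pascal-triangle Green function.) There exists a function G : ℤ² → ℝ, supported in the third-quadrant cone {(m,n) : m ≤ 0, n ≤ 0} ∪ {(0,0)}, built from binomial coefficients with alternating signs (a signed Pascal triangle), satisfying G(m,n) + G(m+1,n) + G(m,n+1) = [(m,n) = (0,0)] for all (m,n) ∈ ℤ². -/
/-- Signed Pascal triangle values. -/
noncomputable def pascalF (j k : ℕ) : ℝ := (-1) ^ (j + k) * ((j + k).choose j : ℝ)

lemma pascalF_rec (j k : ℕ) :
    pascalF (j + 1) (k + 1) + pascalF j (k + 1) + pascalF (j + 1) k = 0 := by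
  simp only [pascalF]
  have h1 : j + 1 + (k + 1) = (j + k + 1) + 1 := by ring
  have h2 : j + (k + 1) = j + k + 1 := by ring
  have h3 : j + 1 + k = j + k + 1 := by ring
  rw [h1, h2, h3, Nat.choose_succ_succ]
  push_cast
  ring

lemma pascalF_left (k : ℕ) : pascalF 0 (k + 1) + pascalF 0 k = 0 := by
  simp only [pascalF, Nat.choose_zero_right, Nat.cast_one, mul_one, zero_add]
  rw [pow_succ]
  ring

lemma pascalF_bottom (j : ℕ) : pascalF (j + 1) 0 + pascalF j 0 = 0 := by
  simp only [pascalF, Nat.add_zero, Nat.choose_self, Nat.cast_one, mul_one]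
  rw [pow_succ]
  ring

noncomputable def pascalG (p : ℤ × ℤ) : ℝ :=
  if p.1 ≤ 0 ∧ p.2 ≤ 0 then pascalF (-p.1).toNat (-p.2).toNat else 0

lemma pascalG_of_not (p : ℤ × ℤ) (h : ¬(p.1 ≤ 0 ∧ p.2 ≤ 0)) : pascalG p = 0 := by
  simp [pascalG, h]

lemma pascalG_of (p : ℤ × ℤ) (h : p.1 ≤ 0 ∧ p.2 ≤ 0) :
    pascalG p = pascalF (-p.1).toNat (-p.2).toNat := by
  simp [pascalG, h]

/-- The Pascal-triangle Green function: there is a fundamental solution of the black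
triangle operator supported in the third-quadrant cone. -/
theorem pascal_green_function :
    ∃ G : ℤ × ℤ → ℝ,
      (∀ p : ℤ × ℤ, G p ≠ 0 → p.1 ≤ 0 ∧ p.2 ≤ 0) ∧
      ∀ m n : ℤ, G (m, n) + G (m + 1, n) + G (m, n + 1) =
        if m = 0 ∧ n = 0 then 1 else 0 := by
  refine ⟨pascalG, ?_, ?_⟩
  · intro p hp
    by_contra h
    exact hp (pascalG_of_not p h)
  · intro m n
    rcases le_or_gt m 0 with hm | hm
    · rcases le_or_gt n 0 with hn | hn
      · rcases eq_or_lt_of_le hm with hm0 | hm1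
        · rcases eq_or_lt_of_le hn with hn0 | hn1
          · -- m = 0, n = 0
            subst hm0; subst hn0
            rw [pascalG_of (0, 0) (by constructor <;> simp),
              pascalG_of_not (0 + 1, 0) (by simp),
              pascalG_of_not (0, 0 + 1) (by simp)]
            simp [pascalF]
          · -- m = 0, n ≤ -1
            have hn' : n ≤ -1 := by omega
            obtain ⟨k, hk⟩ : ∃ k : ℕ, n = -(k + 1) := ⟨(-n - 1).toNat, by omega⟩
            subst hm0; subst hk
            rw [pascalG_of (0, -(↑k + 1)) ⟨le_refl 0, by omega⟩,
              pascalG_of_not (0 + 1, -(↑k + 1)) (by omega),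
              pascalG_of (0, -(↑k + 1) + 1) ⟨le_refl 0, by omega⟩]
            have h1 : (-(0:ℤ)).toNat = 0 := by omega
            have h2 : (-(-(↑k + 1) : ℤ)).toNat = k + 1 := by omega
            have h3 : (-(-(↑k + 1) + 1) : ℤ).toNat = k := by omega
            rw [h1, h2, h3]
            have := pascalF_left k
            have hne : ¬((0:ℤ) = 0 ∧ -(↑k + 1 : ℤ) = 0) := by omega
            rw [if_neg hne]
            linarith
        · rcases eq_or_lt_of_le hn with hn0 | hn1
          · -- n = 0, m ≤ -1
            obtain ⟨j, hj⟩ : ∃ j : ℕ, m = -(j + 1) := ⟨(-m - 1).toNat, by omega⟩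
            subst hn0; subst hj
            rw [pascalG_of (-(↑j + 1), 0) ⟨by omega, le_refl 0⟩,
              pascalG_of (-(↑j + 1) + 1, 0) ⟨by omega, le_refl 0⟩,
              pascalG_of_not (-(↑j + 1), 0 + 1) (by omega)]
            have h1 : (-(0:ℤ)).toNat = 0 := by omega
            have h2 : (-(-(↑j + 1) : ℤ)).toNat = j + 1 := by omega
            have h3 : (-(-(↑j + 1) + 1) : ℤ).toNat = j := by omega
            rw [h1, h2, h3]
            have := pascalF_bottom j
            have hne : ¬((-(↑j + 1) : ℤ) = 0 ∧ (0:ℤ) = 0) := by omega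
            rw [if_neg hne]
            linarith
          · -- m ≤ -1, n ≤ -1
            obtain ⟨j, hj⟩ : ∃ j : ℕ, m = -(j + 1) := ⟨(-m - 1).toNat, by omega⟩
            obtain ⟨k, hk⟩ : ∃ k : ℕ, n = -(k + 1) := ⟨(-n - 1).toNat, by omega⟩
            subst hj; subst hk
            rw [pascalG_of (-(↑j + 1), -(↑k + 1)) ⟨by omega, by omega⟩,
              pascalG_of (-(↑j + 1) + 1, -(↑k + 1)) ⟨by omega, by omega⟩,
              pascalG_of (-(↑j + 1), -(↑k + 1) + 1) ⟨by omega, by omega⟩]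
            have h2 : (-(-(↑j + 1) : ℤ)).toNat = j + 1 := by omega
            have h2' : (-(-(↑k + 1) : ℤ)).toNat = k + 1 := by omega
            have h3 : (-(-(↑j + 1) + 1) : ℤ).toNat = j := by omega
            have h3' : (-(-(↑k + 1) + 1) : ℤ).toNat = k := by omega
            rw [h2, h2', h3, h3']
            have := pascalF_rec j k
            have hne : ¬((-(↑j + 1) : ℤ) = 0 ∧ (-(↑k + 1) : ℤ) = 0) := by omega
            rw [if_neg hne]
            linarith
      · -- n ≥ 1
        rw [pascalG_of_not (m, n) (by omega), pascalG_of_not (m + 1, n) (by omega),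
          pascalG_of_not (m, n + 1) (by omega), if_neg (by omega)]
        ring
    · -- m ≥ 1
      rw [pascalG_of_not (m, n) (by omega), pascalG_of_not (m + 1, n) (by omega),
        pascalG_of_not (m, n + 1) (by omega), if_neg (by omega)]
      ring
end
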